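/- arXiv:2403.16705 — 2 statements merged into one kernel-verified Lean document; each statement's English description precedes it below -/
import Mathlib

section
/- For every nonnegative integer n, the set of partitions λ with o(λ) = n is finite and its cardinality equals p₂(n), the number of pairs of partitions whose sizes sum to n. -/
/-- A partition: a weakly decreasing sequence of nonnegative integers with
finitely many nonzero terms. -/
structure CPartition where
  parts : ℕ → ℕ
  antitone : Antitone parts
  finite_support : Set.Finite {i : ℕ | parts i ≠ 0}

/-- The conjugate partition: `λ'_j = #{i : λ_i ≥ j}` (columns indexed from 1). -/
noncomputable def CPartition.conj (lam : CPartition) (j : ℕ) : ℕ :=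
  Nat.card {i : ℕ | j ≤ lam.parts i}

/-- `o(λ) = Σ_{j odd} λ'_j`, the number of boxes of `λ` in odd-indexed columns. -/
noncomputable def CPartition.oddCols (lam : CPartition) : ℕ :=
  ∑' j : ℕ, if Odd j then lam.conj j else 0

/-- `|λ| = Σᵢ λᵢ`, the size of a partition. -/
noncomputable def CPartition.size (lam : CPartition) : ℕ :=
  ∑' i : ℕ, lam.parts i

/-!
Row `i` of `λ` contributes one box to each odd column `j ≤ λᵢ`, so `o(λ) = Σᵢ ⌈λᵢ / 2⌉`.
Sending an odd part `2a - 1` to a part `a` of a first partition and an even part `2b` to a part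
`b` of a second one is a bijection from partitions to pairs of partitions, under which
`Σᵢ ⌈λᵢ / 2⌉` becomes the total size of the pair; finiteness of the pairs of size `n` transports
along it.
-/

open Finset in
lemma Finset.card_filter_odd_range (n : ℕ) : #{j ∈ range n | Odd j} = n / 2 := by
  induction n with
  | zero => rfl
  | succ n ih =>
    rw [range_add_one, filter_insert]
    split_ifs with h <;> rw [Nat.odd_iff] at h
    · rw [card_insert_of_notMem (by simp), ih]
      omega
    · rw [ih]
      omega

lemma Multiset.sum_range_odd_countP_le {M : Multiset ℕ} {B : ℕ} (hB : ∀ m ∈ M, m < B) :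
    ∑ j ∈ Finset.range B, (if Odd j then M.countP (j ≤ ·) else 0)
      = (M.map fun m => (m + 1) / 2).sum := by
  induction M using Multiset.induction_on with
  | empty => simp
  | cons a M ih =>
    have hsplit : ∀ j, (if Odd j then (a ::ₘ M).countP (j ≤ ·) else 0)
        = (if Odd j then M.countP (j ≤ ·) else 0) + if Odd j ∧ j ≤ a then 1 else 0 := by
      intro j
      by_cases hj : Odd j <;> by_cases hja : j ≤ a <;> simp [hj, hja]
    have hodd : (Finset.range B).filter (fun j => Odd j ∧ j ≤ a)
        = (Finset.range (a + 1)).filter Odd := by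
      have := hB a (Multiset.mem_cons_self a M)
      ext j
      simp only [Finset.mem_filter, Finset.mem_range]
      exact ⟨fun ⟨_, hj, hja⟩ => ⟨by omega, hj⟩, fun ⟨hja, hj⟩ => ⟨by omega, hj, by omega⟩⟩
    simp only [hsplit, Finset.sum_add_distrib, Finset.sum_boole, hodd, Finset.card_filter_odd_range,
      ih fun m hm => hB m (Multiset.mem_cons_of_mem hm), Multiset.map_cons, Multiset.sum_cons,
      Nat.cast_id]
    exact add_comm _ _

lemma Multiset.tsum_odd_countP_le (M : Multiset ℕ) :
    ∑' j, (if Odd j then M.countP (j ≤ ·) else 0) = (M.map fun m => (m + 1) / 2).sum := by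
  have hB : ∀ m ∈ M, m < M.sup + 1 := fun m hm => Nat.lt_succ_of_le (Multiset.le_sup hm)
  rw [tsum_eq_sum (s := Finset.range (M.sup + 1)), Multiset.sum_range_odd_countP_le hB]
  intro j hj
  simp only [Finset.mem_range, not_lt] at hj
  rw [Multiset.countP_eq_zero.2 fun m hm => ?_, ite_self]
  have := hB m hm
  omega

lemma Multiset.map_eq_self {α : Type*} {M : Multiset α} {f : α → α} (h : ∀ m ∈ M, f m = m) :
    M.map f = M := by
  rw [Multiset.map_congr rfl h, Multiset.map_id']

noncomputable def parityEquiv :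
    {M : Multiset ℕ // 0 ∉ M} ≃ {M : Multiset ℕ // 0 ∉ M} × {M : Multiset ℕ // 0 ∉ M} where
  toFun M := (⟨(M.1.filter Odd).map fun m => (m + 1) / 2, by simp⟩,
    ⟨(M.1.filter Even).map (· / 2), by
      simp only [Multiset.mem_map, Multiset.mem_filter, not_exists, not_and]
      rintro _ ⟨hm, k, rfl⟩
      have := ne_of_mem_of_not_mem hm M.2
      omega⟩)
  invFun p := ⟨p.1.1.map (2 * · - 1) + p.2.1.map (2 * ·), by
    simp only [Multiset.mem_add, Multiset.mem_map, not_or, not_exists, not_and]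
    refine ⟨fun m hm => ?_, fun m hm => ?_⟩
    · have := ne_of_mem_of_not_mem hm p.1.2
      omega
    · have := ne_of_mem_of_not_mem hm p.2.2
      omega⟩
  left_inv M := by
    ext1
    conv_rhs => rw [← Multiset.filter_add_not Odd M.1]
    simp only [Multiset.map_map, Nat.not_odd_iff_even]
    congr 1 <;> refine Multiset.map_eq_self fun m hm => ?_
    · obtain ⟨k, rfl⟩ := (Multiset.mem_filter.1 hm).2
      simp only [Function.comp_apply]
      omega
    · obtain ⟨k, rfl⟩ := (Multiset.mem_filter.1 hm).2
      simp only [Function.comp_apply]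
      omega
  right_inv := by
    rintro ⟨⟨A, hA⟩, ⟨B, hB⟩⟩
    have hodd : ∀ a ∈ A, Odd (2 * a - 1) := fun a ha => by
      have := ne_of_mem_of_not_mem ha hA
      exact ⟨a - 1, by omega⟩
    have hA_odd : A.filter (Odd ∘ (2 * · - 1)) = A := Multiset.filter_eq_self.2 hodd
    have hA_even : A.filter (Even ∘ (2 * · - 1)) = 0 :=
      Multiset.filter_eq_nil.2 fun a ha => Nat.not_even_iff_odd.2 (hodd a ha)
    have hB_odd : B.filter (Odd ∘ (2 * ·)) = 0 :=
      Multiset.filter_eq_nil.2 fun b _ => Nat.not_odd_iff_even.2 (even_two_mul b)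
    have hB_even : B.filter (Even ∘ (2 * ·)) = B :=
      Multiset.filter_eq_self.2 fun b _ => even_two_mul b
    simp only [Multiset.filter_add, Multiset.filter_map, hA_odd, hA_even, hB_odd, hB_even,
      Multiset.map_zero, add_zero, zero_add, Multiset.map_map]
    refine Prod.ext (Subtype.ext (Multiset.map_eq_self fun a ha => ?_))
      (Subtype.ext (Multiset.map_eq_self fun b _ => ?_))
    · have := ne_of_mem_of_not_mem ha hA
      simp only [Function.comp_apply]
      omega
    · simp only [Function.comp_apply]
      omega

lemma parityEquiv_sum_add_sum (M : {M : Multiset ℕ // 0 ∉ M}) :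
    (parityEquiv M).1.1.sum + (parityEquiv M).2.1.sum = (M.1.map fun m => (m + 1) / 2).sum := by
  conv_rhs => rw [← Multiset.filter_add_not Odd M.1]
  simp only [Nat.not_odd_iff_even, Multiset.map_add, Multiset.sum_add]
  congr 2
  refine Multiset.map_congr rfl fun m hm => ?_
  obtain ⟨k, rfl⟩ := (Multiset.mem_filter.1 hm).2
  omega

namespace CPartition

variable (lam : CPartition)

noncomputable def support : Finset ℕ := lam.finite_support.toFinset

@[simp]
lemma mem_support {i : ℕ} : i ∈ lam.support ↔ lam.parts i ≠ 0 :=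
  Set.Finite.mem_toFinset _

noncomputable def toMultiset : Multiset ℕ := lam.support.val.map lam.parts

lemma zero_notMem_toMultiset : 0 ∉ lam.toMultiset := by
  simp [toMultiset]

lemma size_eq_sum_toMultiset : lam.size = lam.toMultiset.sum :=
  tsum_eq_sum (s := lam.support) (by simp)

-- `conj 0 = Nat.card ℕ = 0` is a junk value, hence `1 ≤ j` here and below.
lemma conj_eq_countP {j : ℕ} (hj : 1 ≤ j) : lam.conj j = lam.toMultiset.countP (j ≤ ·) := by
  have : {i | j ≤ lam.parts i} = ↑(lam.support.filter (j ≤ lam.parts ·)) := by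
    ext i
    simp only [Set.mem_ofPred_eq, Finset.coe_filter, mem_support]
    omega
  rw [conj, this, Nat.card_coe_set_eq, Set.ncard_coe_finset, toMultiset, Multiset.countP_map]
  rfl

lemma setOf_le_parts_eq_Iio {j : ℕ} (hj : 1 ≤ j) :
    {i | j ≤ lam.parts i} = Set.Iio (lam.conj j) := by
  have hlower : IsLowerSet {i | j ≤ lam.parts i} := fun a b hba ha => ha.trans (lam.antitone hba)
  rcases hlower.eq_univ_or_Iio with huniv | ⟨a, ha⟩
  · obtain ⟨i, hi⟩ := lam.finite_support.infinite_compl.nonempty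
    have hmem : i ∈ {i | j ≤ lam.parts i} := huniv ▸ Set.mem_univ i
    simp only [Set.mem_compl_iff, Set.mem_ofPred_eq, not_not] at hi hmem
    omega
  · rw [conj, ha, Nat.card_coe_set_eq, Set.ncard_Iio_nat]

lemma parts_le_of_conj_eq {lam mu : CPartition} (h : ∀ j, 1 ≤ j → lam.conj j = mu.conj j)
    (i : ℕ) : lam.parts i ≤ mu.parts i := by
  rcases Nat.eq_zero_or_pos (lam.parts i) with h0 | hpos
  · omega
  · have hi : i ∈ {k | lam.parts i ≤ lam.parts k} := le_refl (lam.parts i)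
    rwa [setOf_le_parts_eq_Iio _ hpos, h _ hpos, ← setOf_le_parts_eq_Iio _ hpos] at hi

lemma ext_conj {lam mu : CPartition} (h : ∀ j, 1 ≤ j → lam.conj j = mu.conj j) : lam = mu := by
  cases lam; cases mu
  congr
  exact funext fun i => le_antisymm (parts_le_of_conj_eq h i)
    (parts_le_of_conj_eq (fun j hj => (h j hj).symm) i)

lemma toMultiset_injective : Function.Injective toMultiset := fun lam mu h =>
  ext_conj fun j hj => by rw [conj_eq_countP _ hj, conj_eq_countP _ hj, h]

noncomputable def ofMultiset (M : Multiset ℕ) : CPartition where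
  parts i := (M.sort (· ≥ ·)).getD i 0
  antitone i j hij := by
    set l := M.sort (· ≥ ·)
    show l.getD j 0 ≤ l.getD i 0
    by_cases hj : j < l.length
    · rw [List.getD_eq_getElem l 0 hj, List.getD_eq_getElem l 0 (hij.trans_lt hj)]
      simpa using (M.pairwise_sort (· ≥ ·)).rel_get_of_le
        (a := ⟨i, hij.trans_lt hj⟩) (b := ⟨j, hj⟩) hij
    · rw [List.getD_eq_default l 0 (not_lt.1 hj)]
      exact Nat.zero_le _
  finite_support := (Set.finite_Iio (M.sort (· ≥ ·)).length).subset fun i hi => by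
    by_contra hlen
    exact hi (List.getD_eq_default _ 0 (not_lt.1 hlen))

lemma toMultiset_ofMultiset {M : Multiset ℕ} (hM : 0 ∉ M) : (ofMultiset M).toMultiset = M := by
  set l := M.sort (· ≥ ·) with hl
  have hsupport : (ofMultiset M).support = Finset.range l.length := by
    ext i
    rw [mem_support, Finset.mem_range]
    constructor
    · intro h
      by_contra hlen
      exact h (List.getD_eq_default _ 0 (not_lt.1 hlen))
    · intro h hzero
      rw [show (ofMultiset M).parts i = l.getD i 0 from rfl, List.getD_eq_getElem l 0 h] at hzero
      exact hM (M.sort_eq (· ≥ ·) ▸ hzero ▸ List.getElem_mem h)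
  rw [toMultiset, hsupport]
  conv_rhs => rw [← M.sort_eq (· ≥ ·), ← hl]
  show ((List.range l.length).map (l.getD · 0) : Multiset ℕ) = l
  congr 1
  exact List.ext_getElem (by simp) fun i _ h => by simp [h]

noncomputable def equivMultiset : CPartition ≃ {M : Multiset ℕ // 0 ∉ M} where
  toFun lam := ⟨lam.toMultiset, lam.zero_notMem_toMultiset⟩
  invFun M := ofMultiset M.1
  left_inv lam := toMultiset_injective (toMultiset_ofMultiset lam.zero_notMem_toMultiset)
  right_inv M := Subtype.ext (toMultiset_ofMultiset M.2)

lemma size_eq_sum_equivMultiset : lam.size = (equivMultiset lam).1.sum :=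
  lam.size_eq_sum_toMultiset

lemma oddCols_eq_sum_toMultiset :
    lam.oddCols = (lam.toMultiset.map fun m => (m + 1) / 2).sum := by
  rw [oddCols, ← Multiset.tsum_odd_countP_le]
  refine tsum_congr fun j => ?_
  split_ifs with hj
  · exact conj_eq_countP _ hj.pos
  · rfl

noncomputable def oddEvenEquiv : CPartition ≃ CPartition × CPartition :=
  equivMultiset.trans (parityEquiv.trans (equivMultiset.prodCongr equivMultiset).symm)

lemma oddCols_eq_size_add_size :
    lam.oddCols = (oddEvenEquiv lam).1.size + (oddEvenEquiv lam).2.size := by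
  simp only [size_eq_sum_equivMultiset, oddEvenEquiv, Equiv.trans_apply, Equiv.prodCongr_symm,
    Equiv.prodCongr_apply, Prod.map, Equiv.apply_symm_apply]
  exact (oddCols_eq_sum_toMultiset lam).trans (parityEquiv_sum_add_sum (equivMultiset lam)).symm

lemma finite_setOf_size_eq (k : ℕ) : {lam : CPartition | lam.size = k}.Finite := by
  refine Set.finite_coe_iff.1 (Finite.of_injective (β := Nat.Partition k)
    (fun lam => ⟨lam.1.toMultiset, fun hm => Nat.pos_of_ne_zero (ne_of_mem_of_not_mem hm
      lam.1.zero_notMem_toMultiset), lam.1.size_eq_sum_toMultiset ▸ lam.2⟩) fun lam mu h => ?_)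
  exact Subtype.ext (toMultiset_injective (congrArg Nat.Partition.parts h))

lemma finite_setOf_size_le (n : ℕ) : {lam : CPartition | lam.size ≤ n}.Finite :=
  ((Set.finite_Iic n).biUnion fun k _ => finite_setOf_size_eq k).subset
    fun lam h => Set.mem_biUnion (x := lam.size) h rfl

lemma finite_setOf_size_add_size_eq (n : ℕ) :
    {p : CPartition × CPartition | p.1.size + p.2.size = n}.Finite :=
  ((finite_setOf_size_le n).prod (finite_setOf_size_le n)).subset
    fun p (hp : p.1.size + p.2.size = n) => ⟨by simp only [Set.mem_ofPred_eq]; omega,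
      by simp only [Set.mem_ofPred_eq]; omega⟩

end CPartition

/-- For every `n`, the set of partitions `λ` with `o(λ) = n` is finite, and its
cardinality equals `p₂(n)`, the number of pairs of partitions whose sizes sum
to `n`. -/
theorem count_partitions_by_oddCols (n : ℕ) :
    {lam : CPartition | lam.oddCols = n}.Finite ∧
    {p : CPartition × CPartition | p.1.size + p.2.size = n}.Finite ∧
    Nat.card {lam : CPartition // lam.oddCols = n}
      = Nat.card {p : CPartition × CPartition // p.1.size + p.2.size = n} := by
  have hpairs := CPartition.finite_setOf_size_add_size_eq n
  have hpreimage : {lam : CPartition | lam.oddCols = n}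
      = CPartition.oddEvenEquiv ⁻¹' {p | p.1.size + p.2.size = n} := by
    ext lam
    simp [CPartition.oddCols_eq_size_add_size]
  refine ⟨hpreimage ▸ hpairs.preimage CPartition.oddEvenEquiv.injective.injOn, hpairs, ?_⟩
  exact Nat.card_congr (CPartition.oddEvenEquiv.subtypeEquiv fun lam => by
    rw [CPartition.oddCols_eq_size_add_size])
end

section
/- Let m ≥ 1 be an integer. Call a state a tuple (λ, μ, a, b) where λ and μ are partitions, a = (a₀,…,a_m) ∈ ℤ^{m+1}, b = (b₀,…,b_{m−1}) ∈ ℤ^m, and b_s ≥ a_s, b_s ≥ a_{s+1} for all s = 0,…,m−1. Then for all integers n₀ and n₁, the set of states with e(λ) + e(μ) + Σ_{s=0}^{m} a_s = n₀ and o(λ) + o(μ) + Σ_{s=0}^{m−1} b_s = n₁ is finite, and its cardinality equals p₄(n₁ − m(n₀ − n₁)), the number of quadruples of partitions whose sizes sum to n₁ − m(n₀ − n₁) (equal to 0 if n₁ − m(n₀ − n₁) < 0). -/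
/-- `e(λ) = Σ_{j even, j ≥ 2} λ'_j`, the number of boxes of `λ` in even-indexed
columns. -/
noncomputable def CPartition.evenCols (lam : CPartition) : ℕ :=
  ∑' j : ℕ, if Even j ∧ j ≠ 0 then lam.conj j else 0

lemma card_setLt (c : ℕ) : Nat.card (Set.Iio c) = c := by
  have : Set.Iio c = ↑(Finset.range c) := by ext i; simp
  rw [this, Nat.card_coe_set_eq, Set.ncard_coe_finset, Finset.card_range]

/-- Key lemma: for an antitone finite-support sequence, membership in a
super-level set is equivalent to being below its cardinality. -/
lemma initseg {u : ℕ → ℕ} (hu : Antitone u) (hf : (Function.support u).Finite)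
    (i j : ℕ) : i < u j ↔ j < Nat.card {k | i < u k} := by
  have hS : {k | i < u k}.Finite := by
    apply hf.subset
    intro k hk
    simp only [Set.mem_setOf_eq] at hk
    simp only [Function.mem_support]
    omega
  constructor
  · intro h
    have hsub : ↑(Finset.range (j+1)) ⊆ {k | i < u k} := by
      intro k hk
      simp only [Finset.coe_range, Set.mem_Iio] at hk
      exact lt_of_lt_of_le h (hu (by omega))
    have := Nat.card_mono hS hsub
    rw [Nat.card_coe_set_eq, Set.ncard_coe_finset, Finset.card_range] at this
    omega
  · intro h
    by_contra hc
    push_neg at hc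
    have hsub : {k | i < u k} ⊆ Set.Iio j := by
      intro k hk
      simp only [Set.mem_setOf_eq, Set.mem_Iio] at hk ⊢
      by_contra hkj
      push_neg at hkj
      exact absurd (lt_of_lt_of_le hk (hu hkj)) (by omega)
    have := Nat.card_mono (Set.finite_Iio j) hsub
    rw [card_setLt] at this
    omega

namespace CPartition

lemma parts_support_finite (lam : CPartition) : (Function.support lam.parts).Finite := by
  simpa [Function.support] using lam.finite_support

lemma conj_gal (lam : CPartition) (i k : ℕ) :
    k < lam.parts i ↔ i < lam.conj (k+1) := by
  have hset : {i' : ℕ | k+1 ≤ lam.parts i'} = {i' : ℕ | k < lam.parts i'} := by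
    ext i'; simp [Nat.succ_le_iff]
  unfold CPartition.conj
  rw [hset]
  exact initseg lam.antitone lam.parts_support_finite k i

lemma conj_anti (lam : CPartition) {j j' : ℕ} (h1 : 1 ≤ j) (h : j ≤ j') :
    lam.conj j' ≤ lam.conj j := by
  have hfin : {i : ℕ | j ≤ lam.parts i}.Finite := by
    apply lam.finite_support.subset
    intro i hi; simp only [Set.mem_setOf_eq] at hi ⊢; omega
  exact Nat.card_mono hfin (fun i hi => le_trans h hi)

lemma conj_eq_zero (lam : CPartition) {j : ℕ} (h : lam.parts 0 < j) :
    lam.conj j = 0 := by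
  have : {i : ℕ | j ≤ lam.parts i} = ∅ := by
    ext i
    simp only [Set.mem_setOf_eq, Set.mem_empty_iff_false, iff_false]
    intro hc
    exact absurd (le_trans hc (lam.antitone (Nat.zero_le i))) (by omega)
  unfold CPartition.conj
  rw [this, Nat.card_coe_set_eq, Set.ncard_empty]

end CPartition

/-! ### Tail sums of finsupps -/

noncomputable def ftail (f : ℕ →₀ ℕ) (k : ℕ) : ℕ :=
  ∑ k' ∈ f.support.filter (fun k' => k ≤ k'), f k'

lemma ftail_succ (f : ℕ →₀ ℕ) (k : ℕ) : ftail f k = f k + ftail f (k+1) := by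
  unfold ftail
  rw [Finset.sum_filter, Finset.sum_filter]
  have : ∀ k' ∈ f.support,
      (if k ≤ k' then f k' else 0)
        = (if k' = k then f k' else 0) + (if k+1 ≤ k' then f k' else 0) := by
    intro k' _
    split_ifs <;> omega
  rw [Finset.sum_congr rfl this, Finset.sum_add_distrib, Finset.sum_ite_eq' f.support k f]
  congr 1
  by_cases hk : k ∈ f.support
  · simp [hk]
  · simp [hk, Finsupp.notMem_support_iff.1 hk]

lemma ftail_anti (f : ℕ →₀ ℕ) : Antitone (ftail f) := by
  intro k k' h
  apply Finset.sum_le_sum_of_subset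
  intro x hx
  simp only [Finset.mem_filter] at hx ⊢
  exact ⟨hx.1, le_trans h hx.2⟩

lemma ftail_eq_zero (f : ℕ →₀ ℕ) {k : ℕ} (h : ∀ k' ∈ f.support, k' < k) :
    ftail f k = 0 := by
  unfold ftail
  rw [Finset.sum_eq_zero]
  intro x hx
  simp only [Finset.mem_filter] at hx
  exact absurd hx.2 (by have := h x hx.1; omega)

lemma ftail_support_finite (f : ℕ →₀ ℕ) : (Function.support (ftail f)).Finite := by
  obtain ⟨B, hB⟩ : ∃ B, ∀ k' ∈ f.support, k' < B := by
    refine ⟨(f.support.sup id) + 1, fun k' hk' => ?_⟩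
    have := Finset.le_sup (f := id) hk'
    simp only [id_eq] at this
    omega
  apply (Set.finite_Iio B).subset
  intro k hk
  simp only [Function.mem_support] at hk
  simp only [Set.mem_Iio]
  by_contra hc
  exact hk (ftail_eq_zero f (fun k' h' => lt_of_lt_of_le (hB k' h') (by omega)))

namespace CPartition

/-- The part-multiplicity finsupp of a partition: `mult λ k = #{i : λ_i = k+1}`. -/
noncomputable def mult (lam : CPartition) : ℕ →₀ ℕ :=
  Finsupp.ofSupportFinite (fun k => lam.conj (k+1) - lam.conj (k+2)) <| by
    apply (Set.finite_Iio (lam.parts 0)).subset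
    intro k hk
    simp only [Function.mem_support] at hk
    simp only [Set.mem_Iio]
    by_contra hc
    push_neg at hc
    have h1 : lam.conj (k+1) = 0 := lam.conj_eq_zero (by omega)
    omega

lemma mult_apply (lam : CPartition) (k : ℕ) :
    lam.mult k = lam.conj (k+1) - lam.conj (k+2) := rfl

lemma mult_support_lt (lam : CPartition) {k : ℕ} (h : k ∈ lam.mult.support) :
    k < lam.parts 0 := by
  rw [Finsupp.mem_support_iff, mult_apply] at h
  by_contra hc
  push_neg at hc
  have h1 : lam.conj (k+1) = 0 := lam.conj_eq_zero (by omega)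
  omega

lemma conj_eq_ftail (lam : CPartition) (k : ℕ) :
    lam.conj (k+1) = ftail lam.mult k := by
  have key : ∀ n k, lam.parts 0 ≤ k + n → lam.conj (k+1) = ftail lam.mult k := by
    intro n
    induction n with
    | zero =>
      intro k hk
      rw [lam.conj_eq_zero (by omega), ftail_eq_zero]
      intro k' hk'
      have := lam.mult_support_lt hk'
      omega
    | succ n ih =>
      intro k hk
      have h2 : lam.conj (k+2) ≤ lam.conj (k+1) := lam.conj_anti (by omega) (by omega)
      have h3 : lam.conj (k+1) = lam.mult k + lam.conj (k+2) := by
        rw [mult_apply]; omega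
      rw [h3, ftail_succ, ih (k+1) (by omega)]
  exact key (lam.parts 0) k (by omega)

end CPartition

/-- Reconstruct a partition from a part-multiplicity finsupp. -/
noncomputable def fromMult (f : ℕ →₀ ℕ) : CPartition where
  parts i := Nat.card {k | i < ftail f k}
  antitone := by
    intro i i' h
    apply Nat.card_mono
    · apply (ftail_support_finite f).subset
      intro k hk
      simp only [Set.mem_setOf_eq] at hk
      simp only [Function.mem_support]
      omega
    · intro k hk
      simp only [Set.mem_setOf_eq] at hk ⊢
      omega
  finite_support := by
    apply (Set.finite_Iio (ftail f 0)).subset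
    intro i hi
    simp only [Set.mem_setOf_eq] at hi
    rw [Nat.card_ne_zero] at hi
    obtain ⟨⟨⟨k, hk⟩⟩, -⟩ := hi
    simp only [Set.mem_setOf_eq] at hk
    have := ftail_anti f (Nat.zero_le k)
    simp only [Set.mem_Iio]
    omega

lemma fromMult_gal (f : ℕ →₀ ℕ) (i k : ℕ) :
    i < ftail f k ↔ k < (fromMult f).parts i :=
  initseg (ftail_anti f) (ftail_support_finite f) i k

lemma conj_fromMult (f : ℕ →₀ ℕ) (k : ℕ) :
    (fromMult f).conj (k+1) = ftail f k := by
  unfold CPartition.conj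
  have h1 : {i : ℕ | k+1 ≤ (fromMult f).parts i} = Set.Iio (ftail f k) := by
    ext i
    simp only [Set.mem_setOf_eq, Set.mem_Iio, Nat.succ_le_iff]
    exact (fromMult_gal f i k).symm
  rw [h1, card_setLt]

lemma cpext {a b : CPartition} (h : a.parts = b.parts) : a = b := by
  cases a; cases b; simp_all

/-- The fundamental equivalence between partitions and part-multiplicity
finsupps. -/
noncomputable def multEquiv : CPartition ≃ (ℕ →₀ ℕ) where
  toFun := CPartition.mult
  invFun := fromMult
  left_inv lam := by
    apply cpext
    funext i
    show Nat.card {k | i < ftail lam.mult k} = lam.parts i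
    have h1 : {k | i < ftail lam.mult k} = Set.Iio (lam.parts i) := by
      ext k
      simp only [Set.mem_setOf_eq, Set.mem_Iio, ← lam.conj_eq_ftail k]
      exact (lam.conj_gal i k).symm
    rw [h1, card_setLt]
  right_inv f := by
    ext k
    rw [CPartition.mult_apply, conj_fromMult, conj_fromMult]
    have := ftail_succ f k
    omega

/-! ### Weight sums -/

/-- Size in terms of part multiplicities. -/
noncomputable def szw (f : ℕ →₀ ℕ) : ℕ := f.sum fun k v => v * (k+1)
/-- Odd-column count in terms of part multiplicities. -/
noncomputable def oww (f : ℕ →₀ ℕ) : ℕ := f.sum fun k v => v * ((k+2)/2)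
/-- Even-column count in terms of part multiplicities. -/
noncomputable def eww (f : ℕ →₀ ℕ) : ℕ := f.sum fun k v => v * ((k+1)/2)

lemma sum_tail_weights (f : ℕ →₀ ℕ) (w : ℕ → ℕ) {C : ℕ}
    (hC : ∀ k ∈ f.support, k < C) :
    ∑ j ∈ Finset.range C, w j * ftail f j
      = f.sum (fun k v => v * ∑ j ∈ Finset.range (k+1), w j) := by
  rw [Finsupp.sum]
  have step1 : ∀ j, w j * ftail f j
      = ∑ k ∈ f.support, if j ≤ k then w j * f k else 0 := by
    intro j
    unfold ftail
    rw [Finset.mul_sum, Finset.sum_filter]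
  rw [Finset.sum_congr rfl (fun j _ => step1 j), Finset.sum_comm]
  refine Finset.sum_congr rfl fun k hk => ?_
  have hkC : k < C := hC k hk
  have step2 : ∀ j, (if j ≤ k then w j * f k else 0)
      = (if j ∈ Finset.range (k+1) then w j * f k else 0) := by
    intro j
    simp [Finset.mem_range, Nat.lt_succ_iff]
  rw [Finset.sum_congr rfl (fun j _ => step2 j), Finset.sum_ite_mem,
    Finset.inter_eq_right.mpr (by intro j hj; simp only [Finset.mem_range] at hj ⊢; omega),
    Finset.mul_sum]
  exact Finset.sum_congr rfl fun j _ => mul_comm _ _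

lemma count_odd (n : ℕ) :
    ∑ j ∈ Finset.range n, (if Odd (j+1) then 1 else 0) = (n+1)/2 := by
  induction n with
  | zero => simp
  | succ n ih =>
    rw [Finset.sum_range_succ, ih]
    by_cases h : Odd (n+1)
    · rw [if_pos h]; rw [Nat.odd_iff] at h; omega
    · rw [if_neg h]; rw [Nat.odd_iff] at h; omega

lemma count_even (n : ℕ) :
    ∑ j ∈ Finset.range n, (if Even (j+1) then 1 else 0) = n/2 := by
  induction n with
  | zero => simp
  | succ n ih =>
    rw [Finset.sum_range_succ, ih]
    by_cases h : Even (n+1)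
    · rw [if_pos h]; rw [Nat.even_iff] at h; omega
    · rw [if_neg h]; rw [Nat.even_iff] at h; omega

namespace CPartition

lemma exists_rowBound (lam : CPartition) :
    ∃ R, (∀ i, R ≤ i → lam.parts i = 0) ∧ ∀ k, lam.conj (k+1) ≤ R := by
  refine ⟨lam.finite_support.toFinset.sup id + 1, fun i hi => ?_, fun k => ?_⟩
  · by_contra hc
    have hi' : i ∈ lam.finite_support.toFinset := by
      simp [Set.Finite.mem_toFinset, hc]
    have := Finset.le_sup (f := id) hi'
    simp only [id_eq] at this
    omega
  · set R := lam.finite_support.toFinset.sup id + 1 with hR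
    have hsub : {i : ℕ | k+1 ≤ lam.parts i} ⊆ Set.Iio R := by
      intro i hi
      simp only [Set.mem_setOf_eq] at hi
      simp only [Set.mem_Iio]
      have hi' : i ∈ lam.finite_support.toFinset := by
        simp only [Set.Finite.mem_toFinset, Set.mem_setOf_eq]
        omega
      have := Finset.le_sup (f := id) hi'
      simp only [id_eq] at this
      omega
    have := Nat.card_mono (Set.finite_Iio R) hsub
    rwa [card_setLt] at this

lemma parts_eq_sum (lam : CPartition) (i : ℕ) :
    lam.parts i = ∑ k ∈ Finset.range (lam.parts 0),
      (if i < lam.conj (k+1) then 1 else 0) := by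
  have hC : lam.parts i ≤ lam.parts 0 := lam.antitone (Nat.zero_le i)
  have step : ∀ k, (if i < lam.conj (k+1) then (1:ℕ) else 0)
      = (if k ∈ Finset.range (lam.parts i) then 1 else 0) := by
    intro k
    have := lam.conj_gal i k
    simp only [Finset.mem_range]
    split_ifs <;> omega
  rw [Finset.sum_congr rfl (fun k _ => step k), Finset.sum_ite_mem,
    Finset.inter_eq_right.mpr
      (by intro j hj; simp only [Finset.mem_range] at hj ⊢; omega)]
  simp

lemma size_eq (lam : CPartition) : lam.size = szw lam.mult := by
  obtain ⟨R, hR0, hRc⟩ := lam.exists_rowBound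
  have h1 : lam.size = ∑ i ∈ Finset.range R, lam.parts i := by
    apply tsum_eq_sum
    intro i hi
    simp only [Finset.mem_range] at hi
    exact hR0 i (by omega)
  rw [h1, Finset.sum_congr rfl (fun i _ => lam.parts_eq_sum i), Finset.sum_comm]
  have h2 : ∀ k, ∑ i ∈ Finset.range R, (if i < lam.conj (k+1) then (1:ℕ) else 0)
      = lam.conj (k+1) := by
    intro k
    have step : ∀ i, (if i < lam.conj (k+1) then (1:ℕ) else 0)
        = (if i ∈ Finset.range (lam.conj (k+1)) then 1 else 0) := by
      intro i; simp [Finset.mem_range]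
    rw [Finset.sum_congr rfl (fun i _ => step i), Finset.sum_ite_mem,
      Finset.inter_eq_right.mpr
        (by intro j hj; simp only [Finset.mem_range] at hj ⊢
            have := hRc k; omega)]
    simp
  rw [Finset.sum_congr rfl (fun k _ => h2 k)]
  have h3 : ∀ k, lam.conj (k+1) = (fun j => 1) k * ftail lam.mult k := by
    intro k; rw [lam.conj_eq_ftail k, one_mul]
  rw [Finset.sum_congr rfl (fun k _ => h3 k),
    sum_tail_weights lam.mult _ (fun k hk => lam.mult_support_lt hk)]
  unfold szw
  exact Finsupp.sum_congr fun k _ => by simp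

lemma oddCols_eq (lam : CPartition) : lam.oddCols = oww lam.mult := by
  set C := lam.parts 0 with hC
  have h1 : lam.oddCols
      = ∑ j ∈ Finset.range (C+1), (if Odd j then lam.conj j else 0) := by
    apply tsum_eq_sum
    intro j hj
    simp only [Finset.mem_range] at hj
    rw [lam.conj_eq_zero (by omega)]
    simp
  rw [h1, Finset.sum_range_succ']
  rw [show ((if Odd 0 then lam.conj 0 else 0) : ℕ) = 0 by simp [Nat.odd_iff], add_zero]
  have h3 : ∀ j, (if Odd (j+1) then lam.conj (j+1) else 0)
      = (if Odd (j+1) then 1 else 0) * ftail lam.mult j := by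
    intro j
    rw [lam.conj_eq_ftail j]
    split_ifs <;> simp
  rw [Finset.sum_congr rfl (fun j _ => h3 j),
    sum_tail_weights lam.mult _ (fun k hk => lam.mult_support_lt hk)]
  unfold oww
  refine Finsupp.sum_congr fun k _ => ?_
  rw [count_odd]

lemma evenCols_eq (lam : CPartition) : lam.evenCols = eww lam.mult := by
  set C := lam.parts 0 with hC
  have h1 : lam.evenCols
      = ∑ j ∈ Finset.range (C+1), (if Even j ∧ j ≠ 0 then lam.conj j else 0) := by
    apply tsum_eq_sum
    intro j hj
    simp only [Finset.mem_range] at hj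
    rw [lam.conj_eq_zero (by omega)]
    simp
  rw [h1, Finset.sum_range_succ']
  rw [show ((if Even 0 ∧ (0:ℕ) ≠ 0 then lam.conj 0 else 0) : ℕ) = 0 by simp, add_zero]
  have h3 : ∀ j, (if Even (j+1) ∧ j+1 ≠ 0 then lam.conj (j+1) else 0)
      = (if Even (j+1) then 1 else 0) * ftail lam.mult j := by
    intro j
    rw [lam.conj_eq_ftail j]
    have : (Even (j+1) ∧ j+1 ≠ 0) ↔ Even (j+1) := by simp
    rw [if_congr this rfl rfl]
    split_ifs <;> simp
  rw [Finset.sum_congr rfl (fun j _ => h3 j),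
    sum_tail_weights lam.mult _ (fun k hk => lam.mult_support_lt hk)]
  unfold eww
  refine Finsupp.sum_congr fun k _ => ?_
  rw [count_even]

end CPartition

/-! ### The zigzag reparametrization -/

/-- The `a`-sequence built from the free data `(k, d)`. -/
noncomputable def zigA (m : ℕ) (k : ℤ) (d : Fin m → ℤ) (s : Fin (m+1)) : ℤ :=
  k + ∑ t : Fin m, if s ≤ t.castSucc then d t else 0

lemma zigA_diff (m : ℕ) (k : ℤ) (d : Fin m → ℤ) (s : Fin m) :
    zigA m k d s.castSucc = d s + zigA m k d s.succ := by
  unfold zigA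
  have key : ∀ t : Fin m,
      (if s.castSucc ≤ t.castSucc then d t else 0)
        = (if s.succ ≤ t.castSucc then d t else 0) + (if t = s then d t else 0) := by
    intro t
    by_cases h : (t:ℕ) = (s:ℕ)
    · have ht : t = s := Fin.ext h
      subst ht
      rw [if_pos le_rfl, if_neg (by simp [Fin.le_def]), if_pos rfl, zero_add]
    · rw [show (if t = s then d t else 0) = 0 from
        if_neg (fun hc => h (by rw [hc])), add_zero]
      refine if_congr ?_ rfl rfl
      simp only [Fin.le_def, Fin.coe_castSucc, Fin.val_succ]
      omega
  rw [Finset.sum_congr rfl (fun t _ => key t), Finset.sum_add_distrib,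
    Finset.sum_ite_eq' Finset.univ s d]
  simp only [Finset.mem_univ, if_true]
  ring

lemma zigA_last (m : ℕ) (k : ℤ) (d : Fin m → ℤ) :
    zigA m k d (Fin.last m) = k := by
  unfold zigA
  rw [Finset.sum_eq_zero, add_zero]
  intro t _
  rw [if_neg]
  simp only [Fin.le_def, Fin.val_last, Fin.coe_castSucc]
  omega

lemma zigA_zero (m : ℕ) (k : ℤ) (d : Fin m → ℤ) :
    zigA m k d 0 = k + ∑ t, d t := by
  unfold zigA
  congr 1

lemma zigA_sum (m : ℕ) (k : ℤ) (d : Fin m → ℤ) :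
    ∑ s : Fin (m+1), zigA m k d s = (m+1) * k + ∑ t : Fin m, ((t:ℕ)+1 : ℤ) * d t := by
  unfold zigA
  rw [Finset.sum_add_distrib, Finset.sum_const, Finset.card_univ, Fintype.card_fin,
    Finset.sum_comm]
  have h2 : ∀ t : Fin m,
      (∑ s : Fin (m+1), if s ≤ t.castSucc then d t else 0) = ((t:ℕ)+1 : ℤ) * d t := by
    intro t
    have h1 : ∀ s : Fin (m+1), (if s ≤ t.castSucc then d t else 0)
        = (if s ∈ Finset.Iic t.castSucc then d t else 0) := by
      intro s; exact if_congr (Iff.symm Finset.mem_Iic) rfl rfl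
    rw [Finset.sum_congr rfl (fun s _ => h1 s), Finset.sum_ite_mem, Finset.univ_inter,
      Finset.sum_const, Fin.card_Iic]
    simp only [Fin.coe_castSucc, nsmul_eq_mul]
    push_cast
    ring
  rw [Finset.sum_congr rfl (fun t _ => h2 t)]
  simp only [nsmul_eq_mul]
  push_cast
  ring

/-- The zigzag equivalence: `(k, x, y) ↦ (a, b)`. -/
noncomputable def zigzagEquiv (m : ℕ) :
    (ℤ × (Fin m → ℕ) × (Fin m → ℕ)) ≃
    {ab : (Fin (m+1) → ℤ) × (Fin m → ℤ) //
      ∀ s : Fin m, ab.1 s.castSucc ≤ ab.2 s ∧ ab.1 s.succ ≤ ab.2 s} where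
  toFun w :=
    ⟨(zigA m w.1 (fun t => (w.2.2 t : ℤ) - w.2.1 t),
      fun s => (w.2.2 s : ℤ) + zigA m w.1 (fun t => (w.2.2 t : ℤ) - w.2.1 t) s.succ), by
      intro s
      constructor
      · show zigA m w.1 (fun t => (w.2.2 t : ℤ) - w.2.1 t) s.castSucc
          ≤ (w.2.2 s : ℤ) + zigA m w.1 (fun t => (w.2.2 t : ℤ) - w.2.1 t) s.succ
        rw [zigA_diff]
        show ((w.2.2 s : ℤ) - w.2.1 s)
            + zigA m w.1 (fun t => (w.2.2 t : ℤ) - w.2.1 t) s.succ ≤ _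
        have h0 : (0:ℤ) ≤ (w.2.1 s : ℤ) := Int.natCast_nonneg _
        linarith
      · show zigA m w.1 (fun t => (w.2.2 t : ℤ) - w.2.1 t) s.succ
          ≤ (w.2.2 s : ℤ) + zigA m w.1 (fun t => (w.2.2 t : ℤ) - w.2.1 t) s.succ
        have h0 : (0:ℤ) ≤ (w.2.2 s : ℤ) := Int.natCast_nonneg _
        linarith⟩
  invFun z :=
    (z.1.1 (Fin.last m),
     fun s => (z.1.2 s - z.1.1 s.castSucc).toNat,
     fun s => (z.1.2 s - z.1.1 s.succ).toNat)
  left_inv w := by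
    obtain ⟨k, x, y⟩ := w
    simp only []
    refine Prod.ext ?_ (Prod.ext ?_ ?_)
    · exact zigA_last m k _
    · funext s
      have h1 : ((y s : ℤ) + zigA m k (fun t => (y t : ℤ) - x t) s.succ)
          - zigA m k (fun t => (y t : ℤ) - x t) s.castSucc = (x s : ℤ) := by
        rw [zigA_diff]; ring
      simp only [h1, Int.toNat_natCast]
    · funext s
      have h1 : ((y s : ℤ) + zigA m k (fun t => (y t : ℤ) - x t) s.succ)
          - zigA m k (fun t => (y t : ℤ) - x t) s.succ = (y s : ℤ) := by ring
      simp only [h1, Int.toNat_natCast]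
  right_inv z := by
    obtain ⟨⟨a, b⟩, hz⟩ := z
    have hd : ∀ t : Fin m,
        ((b t - a t.succ).toNat : ℤ) - ((b t - a t.castSucc).toNat : ℤ)
          = a t.castSucc - a t.succ := by
      intro t
      rw [Int.toNat_of_nonneg (by linarith [(hz t).2]),
        Int.toNat_of_nonneg (by linarith [(hz t).1])]
      ring
    have ha : ∀ s : Fin (m+1),
        zigA m (a (Fin.last m))
          (fun t => ((b t - a t.succ).toNat : ℤ) - ((b t - a t.castSucc).toNat : ℤ)) s
          = a s := by
      intro s
      induction s using Fin.reverseInduction with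
      | last => exact zigA_last m _ _
      | cast s ih =>
        rw [zigA_diff, ih, hd s]
        ring
    apply Subtype.ext
    refine Prod.ext ?_ ?_
    · funext s
      exact ha s
    · funext s
      show ((b s - a s.succ).toNat : ℤ) + _ = b s
      rw [ha s.succ, Int.toNat_of_nonneg (by linarith [(hz s).2])]
      ring

/-! ### The weight `W = (m+1)o - m e` and the pairing equivalences -/

/-- The slanted weight of a part-multiplicity finsupp. -/
noncomputable def wnat (m : ℕ) (f : ℕ →₀ ℕ) : ℕ :=
  f.sum fun k v => v * (if k % 2 = 1 then (k+1)/2 else k/2 + m + 1)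

lemma w_key (m : ℕ) (f : ℕ →₀ ℕ) :
    (m+1) * oww f = m * eww f + wnat m f := by
  unfold oww eww wnat
  rw [Finsupp.sum, Finsupp.sum, Finsupp.sum, Finset.mul_sum, Finset.mul_sum,
    ← Finset.sum_add_distrib]
  refine Finset.sum_congr rfl fun k _ => ?_
  rcases Nat.even_or_odd k with ⟨r, hr⟩ | ⟨r, hr⟩
  · rw [if_neg (by omega), show (k+2)/2 = r+1 by omega, show (k+1)/2 = r by omega,
      show k/2 = r by omega]
    ring
  · rw [if_pos (by omega), show (k+2)/2 = r+1 by omega, show (k+1)/2 = r+1 by omega]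
    ring

lemma sum_range_two_mul {M : Type*} [AddCommMonoid M] (F : ℕ → M) (n : ℕ) :
    ∑ k ∈ Finset.range (2*n), F k
      = (∑ r ∈ Finset.range n, F (2*r)) + ∑ r ∈ Finset.range n, F (2*r+1) := by
  induction n with
  | zero => simp
  | succ n ih =>
    rw [show 2*(n+1) = 2*n+1+1 by ring, Finset.sum_range_succ, Finset.sum_range_succ,
      ih, Finset.sum_range_succ, Finset.sum_range_succ]
    abel

lemma fsupp_bound (f : ℕ →₀ ℕ) : ∀ j, f j ≠ 0 → j < f.support.sup id + 1 := by
  intro j hj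
  have hmem : j ∈ f.support := Finsupp.mem_support_iff.2 hj
  have := Finset.le_sup (f := id) hmem
  simp only [id_eq] at this
  omega

/-- Pairing equivalence for `(f, y)` (weights `t+1`). -/
noncomputable def PE1 (m : ℕ) : ((ℕ →₀ ℕ) × (Fin m → ℕ)) ≃ ((ℕ →₀ ℕ) × (ℕ →₀ ℕ)) where
  toFun w :=
    (Finsupp.ofSupportFinite (fun r => w.1 (2*r+1))
      ((Set.finite_Iio (w.1.support.sup id + 1)).subset (by
        intro r hr
        simp only [Function.mem_support] at hr
        have := fsupp_bound w.1 _ hr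
        simp only [Set.mem_Iio]
        omega)),
     Finsupp.ofSupportFinite
      (fun r => if h : r < m then w.2 ⟨r, h⟩ else w.1 (2*(r-m)))
      ((Set.finite_Iio (m + w.1.support.sup id + 1)).subset (by
        intro r hr
        simp only [Function.mem_support] at hr
        simp only [Set.mem_Iio]
        by_cases h : r < m
        · omega
        · rw [dif_neg h] at hr
          have := fsupp_bound w.1 _ hr
          omega)))
  invFun q :=
    (Finsupp.ofSupportFinite
      (fun j => if j % 2 = 1 then q.1 ((j-1)/2) else q.2 (j/2 + m))
      ((Set.finite_Iio (2*(q.1.support.sup id) + 2*(q.2.support.sup id) + 2*m + 2)).subset (by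
        intro j hj
        simp only [Function.mem_support] at hj
        simp only [Set.mem_Iio]
        by_cases h : j % 2 = 1
        · rw [if_pos h] at hj
          have := fsupp_bound q.1 _ hj
          omega
        · rw [if_neg h] at hj
          have := fsupp_bound q.2 _ hj
          omega)),
     fun t => q.2 t.val)
  left_inv w := by
    obtain ⟨f, y⟩ := w
    refine Prod.ext ?_ ?_
    · apply Finsupp.ext
      intro j
      show (if j % 2 = 1 then _ else _) = f j
      simp only [Finsupp.ofSupportFinite_coe]
      by_cases h : j % 2 = 1
      · rw [if_pos h, show 2*((j-1)/2)+1 = j by omega]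
      · rw [if_neg h, dif_neg (by omega : ¬ j/2 + m < m),
          show 2*(j/2 + m - m) = j by omega]
    · funext t
      show (if h : (t:ℕ) < m then y ⟨t, h⟩ else _) = y t
      rw [dif_pos t.isLt]
  right_inv q := by
    obtain ⟨P, Q⟩ := q
    refine Prod.ext ?_ ?_
    · apply Finsupp.ext
      intro r
      show (if (2*r+1) % 2 = 1 then P ((2*r+1-1)/2) else Q ((2*r+1)/2 + m)) = P r
      rw [if_pos (by omega : (2*r+1) % 2 = 1), show (2*r+1-1)/2 = r by omega]
    · apply Finsupp.ext
      intro r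
      show (if h : r < m then Q ((⟨r,h⟩ : Fin m) : ℕ) else
          (if (2*(r-m)) % 2 = 1 then P ((2*(r-m)-1)/2) else Q ((2*(r-m))/2 + m))) = Q r
      by_cases h : r < m
      · rw [dif_pos h]
      · rw [dif_neg h, if_neg (by omega : ¬ (2*(r-m)) % 2 = 1),
          show 2*(r-m)/2 + m = r by omega]

/-- Pairing equivalence for `(g, x)` (weights `m-t`). -/
noncomputable def PE2 (m : ℕ) : ((ℕ →₀ ℕ) × (Fin m → ℕ)) ≃ ((ℕ →₀ ℕ) × (ℕ →₀ ℕ)) where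
  toFun w :=
    (Finsupp.ofSupportFinite (fun r => w.1 (2*r+1))
      ((Set.finite_Iio (w.1.support.sup id + 1)).subset (by
        intro r hr
        simp only [Function.mem_support] at hr
        have := fsupp_bound w.1 _ hr
        simp only [Set.mem_Iio]
        omega)),
     Finsupp.ofSupportFinite
      (fun r => if h : r < m then w.2 ⟨m-1-r, by omega⟩ else w.1 (2*(r-m)))
      ((Set.finite_Iio (m + w.1.support.sup id + 1)).subset (by
        intro r hr
        simp only [Function.mem_support] at hr
        simp only [Set.mem_Iio]
        by_cases h : r < m
        · omega
        · rw [dif_neg h] at hr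
          have := fsupp_bound w.1 _ hr
          omega)))
  invFun q :=
    (Finsupp.ofSupportFinite
      (fun j => if j % 2 = 1 then q.1 ((j-1)/2) else q.2 (j/2 + m))
      ((Set.finite_Iio (2*(q.1.support.sup id) + 2*(q.2.support.sup id) + 2*m + 2)).subset (by
        intro j hj
        simp only [Function.mem_support] at hj
        simp only [Set.mem_Iio]
        by_cases h : j % 2 = 1
        · rw [if_pos h] at hj
          have := fsupp_bound q.1 _ hj
          omega
        · rw [if_neg h] at hj
          have := fsupp_bound q.2 _ hj
          omega)),
     fun t => q.2 (m-1-t.val))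
  left_inv w := by
    obtain ⟨g, x⟩ := w
    refine Prod.ext ?_ ?_
    · apply Finsupp.ext
      intro j
      show (if j % 2 = 1 then g (2*((j-1)/2)+1)
            else (if h : (j/2+m) < m then x ⟨m-1-(j/2+m), by omega⟩
                  else g (2*((j/2+m)-m)))) = g j
      by_cases h : j % 2 = 1
      · rw [if_pos h, show 2*((j-1)/2)+1 = j by omega]
      · rw [if_neg h, dif_neg (by omega : ¬ j/2 + m < m),
          show 2*(j/2 + m - m) = j by omega]
    · funext t
      have ht := t.isLt
      show (if h : m-1-(t:ℕ) < m then x ⟨m-1-(m-1-(t:ℕ)), by omega⟩ else _) = x t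
      rw [dif_pos (by omega : m-1-(t:ℕ) < m)]
      congr 1
      exact Fin.ext (by simp; omega)
  right_inv q := by
    obtain ⟨R, S⟩ := q
    refine Prod.ext ?_ ?_
    · apply Finsupp.ext
      intro r
      show (if (2*r+1) % 2 = 1 then R ((2*r+1-1)/2) else S ((2*r+1)/2 + m)) = R r
      rw [if_pos (by omega : (2*r+1) % 2 = 1), show (2*r+1-1)/2 = r by omega]
    · apply Finsupp.ext
      intro r
      show (if h : r < m then S (m-1-((⟨m-1-r, by omega⟩ : Fin m) : ℕ)) else
          (if (2*(r-m)) % 2 = 1 then R ((2*(r-m)-1)/2) else S ((2*(r-m))/2 + m))) = S r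
      by_cases h : r < m
      · rw [dif_pos h]
        congr 1
        show m-1-(m-1-r) = r
        omega
      · rw [dif_neg h, if_neg (by omega : ¬ (2*(r-m)) % 2 = 1),
          show 2*(r-m)/2 + m = r by omega]

lemma PE1_fst_apply (m : ℕ) (f : ℕ →₀ ℕ) (y : Fin m → ℕ) (r : ℕ) :
    (PE1 m (f, y)).1 r = f (2*r+1) := rfl
lemma PE1_snd_apply (m : ℕ) (f : ℕ →₀ ℕ) (y : Fin m → ℕ) (r : ℕ) :
    (PE1 m (f, y)).2 r = if h : r < m then y ⟨r, h⟩ else f (2*(r-m)) := rfl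
lemma PE2_fst_apply (m : ℕ) (g : ℕ →₀ ℕ) (x : Fin m → ℕ) (r : ℕ) :
    (PE2 m (g, x)).1 r = g (2*r+1) := rfl
lemma PE2_snd_apply (m : ℕ) (g : ℕ →₀ ℕ) (x : Fin m → ℕ) (r : ℕ) :
    (PE2 m (g, x)).2 r = if h : r < m then x ⟨m-1-r, by omega⟩ else g (2*(r-m)) := rfl

lemma wnat_eq_sum (m : ℕ) (f : ℕ →₀ ℕ) {B : ℕ} (hB : ∀ j, f j ≠ 0 → j < B) :
    wnat m f = (∑ r ∈ Finset.range B, f (2*r) * (r+m+1))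
      + ∑ r ∈ Finset.range B, f (2*r+1) * (r+1) := by
  unfold wnat
  rw [Finsupp.sum_of_support_subset f (s := Finset.range (2*B))
    (by intro j hj
        rw [Finsupp.mem_support_iff] at hj
        simp only [Finset.mem_range]
        have := hB j hj
        omega)
    _ (by intro i _; simp), sum_range_two_mul]
  congr 1
  · refine Finset.sum_congr rfl fun r _ => ?_
    rw [if_neg (by omega : ¬ (2*r) % 2 = 1), show 2*r/2 = r by omega]
  · refine Finset.sum_congr rfl fun r _ => ?_
    rw [if_pos (by omega : (2*r+1) % 2 = 1), show (2*r+1+1)/2 = r+1 by omega]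

lemma szw_eq_sum (q : ℕ →₀ ℕ) {B : ℕ} (hB : ∀ j, q j ≠ 0 → j < B) :
    szw q = ∑ r ∈ Finset.range B, q r * (r+1) := by
  unfold szw
  exact Finsupp.sum_of_support_subset q
    (by intro j hj
        rw [Finsupp.mem_support_iff] at hj
        simp only [Finset.mem_range]
        exact hB j hj)
    _ (by intro i _; simp)

lemma PE1_size (m : ℕ) (f : ℕ →₀ ℕ) (y : Fin m → ℕ) :
    szw (PE1 m (f, y)).1 + szw (PE1 m (f, y)).2
      = wnat m f + ∑ t : Fin m, y t * ((t:ℕ)+1) := by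
  set B := f.support.sup id + 1 with hBdef
  have hfB : ∀ j, f j ≠ 0 → j < B := fsupp_bound f
  have hP : szw (PE1 m (f, y)).1 = ∑ r ∈ Finset.range B, f (2*r+1) * (r+1) := by
    rw [szw_eq_sum (PE1 m (f, y)).1 (B := B)
      (by intro r hr
          rw [PE1_fst_apply] at hr
          have := hfB _ hr
          omega)]
    exact Finset.sum_congr rfl fun r _ => by rw [PE1_fst_apply]
  have hQ : szw (PE1 m (f, y)).2
      = (∑ t : Fin m, y t * ((t:ℕ)+1)) + ∑ r ∈ Finset.range B, f (2*r) * (m+r+1) := by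
    rw [szw_eq_sum (PE1 m (f, y)).2 (B := m + B)
      (by intro r hr
          rw [PE1_snd_apply] at hr
          by_cases h : r < m
          · omega
          · rw [dif_neg h] at hr
            have := hfB _ hr
            omega)]
    rw [Finset.range_eq_Ico, ← Finset.sum_Ico_consecutive _ (Nat.zero_le m) (by omega),
      ← Finset.range_eq_Ico, Finset.sum_Ico_eq_sum_range]
    congr 1
    · rw [← Fin.sum_univ_eq_sum_range (fun r => (PE1 m (f, y)).2 r * (r+1)) m]
      refine Finset.sum_congr rfl fun t _ => ?_
      rw [PE1_snd_apply, dif_pos t.isLt, Fin.eta]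
    · rw [show m + B - m = B by omega]
      refine Finset.sum_congr rfl fun i _ => ?_
      rw [PE1_snd_apply, dif_neg (by omega : ¬ m + i < m), show 2*(m+i-m) = 2*i by omega,
        show m+i+1 = m+i+1 from rfl]
  rw [hP, hQ, wnat_eq_sum m f hfB]
  have : ∑ r ∈ Finset.range B, f (2*r) * (m+r+1)
      = ∑ r ∈ Finset.range B, f (2*r) * (r+m+1) :=
    Finset.sum_congr rfl fun r _ => by ring_nf
  omega

lemma PE2_size (m : ℕ) (g : ℕ →₀ ℕ) (x : Fin m → ℕ) :
    szw (PE2 m (g, x)).1 + szw (PE2 m (g, x)).2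
      = wnat m g + ∑ t : Fin m, x t * (m - (t:ℕ)) := by
  set B := g.support.sup id + 1 with hBdef
  have hfB : ∀ j, g j ≠ 0 → j < B := fsupp_bound g
  have hP : szw (PE2 m (g, x)).1 = ∑ r ∈ Finset.range B, g (2*r+1) * (r+1) := by
    rw [szw_eq_sum (PE2 m (g, x)).1 (B := B)
      (by intro r hr
          rw [PE2_fst_apply] at hr
          have := hfB _ hr
          omega)]
    exact Finset.sum_congr rfl fun r _ => by rw [PE2_fst_apply]
  have hQ : szw (PE2 m (g, x)).2
      = (∑ t : Fin m, x t * (m - (t:ℕ))) + ∑ r ∈ Finset.range B, g (2*r) * (m+r+1) := by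
    rw [szw_eq_sum (PE2 m (g, x)).2 (B := m + B)
      (by intro r hr
          rw [PE2_snd_apply] at hr
          by_cases h : r < m
          · omega
          · rw [dif_neg h] at hr
            have := hfB _ hr
            omega)]
    rw [Finset.range_eq_Ico, ← Finset.sum_Ico_consecutive _ (Nat.zero_le m) (by omega),
      ← Finset.range_eq_Ico, Finset.sum_Ico_eq_sum_range]
    congr 1
    · rw [← Finset.sum_range_reflect (fun r => (PE2 m (g, x)).2 r * (r+1)) m,
        ← Fin.sum_univ_eq_sum_range (fun r => (PE2 m (g, x)).2 (m-1-r) * (m-1-r+1)) m]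
      refine Finset.sum_congr rfl fun t _ => ?_
      have ht := t.isLt
      rw [PE2_snd_apply, dif_pos (by omega : m-1-(t:ℕ) < m)]
      have h1 : (⟨m-1-(m-1-(t:ℕ)), by omega⟩ : Fin m) = t := Fin.ext (by simp; omega)
      rw [h1, show m-1-(t:ℕ)+1 = m - (t:ℕ) by omega]
    · rw [show m + B - m = B by omega]
      refine Finset.sum_congr rfl fun i _ => ?_
      rw [PE2_snd_apply, dif_neg (by omega : ¬ m + i < m), show 2*(m+i-m) = 2*i by omega]
  rw [hP, hQ, wnat_eq_sum m g hfB]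
  have : ∑ r ∈ Finset.range B, g (2*r) * (m+r+1)
      = ∑ r ∈ Finset.range B, g (2*r) * (r+m+1) :=
    Finset.sum_congr rfl fun r _ => by ring_nf
  omega

/-! ### Assembly -/

lemma zig_sum_a (m : ℕ) (w : ℤ × (Fin m → ℕ) × (Fin m → ℕ)) :
    ∑ s : Fin (m+1), ((zigzagEquiv m w).1.1 s)
      = ((m:ℤ)+1) * w.1
        + ∑ t : Fin m, (((t:ℕ):ℤ)+1) * ((w.2.2 t : ℤ) - w.2.1 t) := by
  show ∑ s : Fin (m+1), zigA m w.1 (fun t => (w.2.2 t : ℤ) - w.2.1 t) s = _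
  rw [zigA_sum]

lemma zig_sum_b (m : ℕ) (w : ℤ × (Fin m → ℕ) × (Fin m → ℕ)) :
    ∑ s : Fin m, ((zigzagEquiv m w).1.2 s)
      = (m:ℤ) * w.1
        + (∑ t : Fin m, ((t:ℕ):ℤ) * ((w.2.2 t : ℤ) - w.2.1 t))
        + ∑ t : Fin m, (w.2.2 t : ℤ) := by
  show ∑ s : Fin m,
      ((w.2.2 s : ℤ) + zigA m w.1 (fun t => (w.2.2 t : ℤ) - w.2.1 t) s.succ) = _
  rw [Finset.sum_add_distrib]
  have h1 : ∑ s : Fin m, zigA m w.1 (fun t => (w.2.2 t : ℤ) - w.2.1 t) s.succ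
      = (∑ s : Fin (m+1), zigA m w.1 (fun t => (w.2.2 t : ℤ) - w.2.1 t) s)
        - zigA m w.1 (fun t => (w.2.2 t : ℤ) - w.2.1 t) 0 := by
    rw [Fin.sum_univ_succ]
    ring
  rw [h1, zigA_sum, zigA_zero]
  have h2 : ∑ t : Fin m, (((t:ℕ)+1 : ℤ)) * ((w.2.2 t : ℤ) - w.2.1 t)
      = (∑ t : Fin m, ((t:ℕ):ℤ) * ((w.2.2 t : ℤ) - w.2.1 t))
        + ∑ t : Fin m, ((w.2.2 t : ℤ) - w.2.1 t) := by
    rw [← Finset.sum_add_distrib]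
    exact Finset.sum_congr rfl fun t _ => by push_cast; ring
  rw [h2]
  push_cast
  ring

section Steps

variable (m : ℕ) (n0 n1 : ℤ)

/-- Step 1: regroup the zigzag data into a subtype. -/
def step1 :
    {x : CPartition × CPartition × (Fin (m + 1) → ℤ) × (Fin m → ℤ) //
        (∀ s : Fin m, x.2.2.1 s.castSucc ≤ x.2.2.2 s ∧ x.2.2.1 s.succ ≤ x.2.2.2 s) ∧
        (x.1.evenCols : ℤ) + x.2.1.evenCols + (∑ s, x.2.2.1 s) = n0 ∧
        (x.1.oddCols : ℤ) + x.2.1.oddCols + (∑ s, x.2.2.2 s) = n1} ≃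
    {v : CPartition × CPartition ×
        {ab : (Fin (m+1) → ℤ) × (Fin m → ℤ) //
          ∀ s : Fin m, ab.1 s.castSucc ≤ ab.2 s ∧ ab.1 s.succ ≤ ab.2 s} //
        (v.1.evenCols : ℤ) + v.2.1.evenCols + (∑ s, v.2.2.1.1 s) = n0 ∧
        (v.1.oddCols : ℤ) + v.2.1.oddCols + (∑ s, v.2.2.1.2 s) = n1} where
  toFun x := ⟨⟨x.1.1, x.1.2.1, ⟨x.1.2.2, x.2.1⟩⟩, x.2.2.1, x.2.2.2⟩
  invFun v := ⟨⟨v.1.1, v.1.2.1, v.1.2.2.1.1, v.1.2.2.1.2⟩, v.1.2.2.2, v.2.1, v.2.2⟩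
  left_inv x := rfl
  right_inv v := rfl

/-- Step 2: replace partitions by multiplicity finsupps and zigzags by
free data. -/
noncomputable def step2 :
    {v : CPartition × CPartition ×
        {ab : (Fin (m+1) → ℤ) × (Fin m → ℤ) //
          ∀ s : Fin m, ab.1 s.castSucc ≤ ab.2 s ∧ ab.1 s.succ ≤ ab.2 s} //
        (v.1.evenCols : ℤ) + v.2.1.evenCols + (∑ s, v.2.2.1.1 s) = n0 ∧
        (v.1.oddCols : ℤ) + v.2.1.oddCols + (∑ s, v.2.2.1.2 s) = n1} ≃
    {w : (ℕ →₀ ℕ) × (ℕ →₀ ℕ) × (ℤ × (Fin m → ℕ) × (Fin m → ℕ)) //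
        (eww w.1 : ℤ) + eww w.2.1
          + (((m:ℤ)+1) * w.2.2.1
            + ∑ t : Fin m, (((t:ℕ):ℤ)+1) * ((w.2.2.2.2 t : ℤ) - w.2.2.2.1 t)) = n0 ∧
        (oww w.1 : ℤ) + oww w.2.1
          + ((m:ℤ) * w.2.2.1
            + (∑ t : Fin m, ((t:ℕ):ℤ) * ((w.2.2.2.2 t : ℤ) - w.2.2.2.1 t))
            + ∑ t : Fin m, (w.2.2.2.2 t : ℤ)) = n1} where
  toFun v := ⟨(v.1.1.mult, v.1.2.1.mult, (zigzagEquiv m).symm v.1.2.2), by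
    have h1 := v.2.1
    have h2 := v.2.2
    have hz : zigzagEquiv m ((zigzagEquiv m).symm v.1.2.2) = v.1.2.2 :=
      Equiv.apply_symm_apply _ _
    have hA := zig_sum_a m ((zigzagEquiv m).symm v.1.2.2)
    have hB := zig_sum_b m ((zigzagEquiv m).symm v.1.2.2)
    rw [hz] at hA hB
    rw [CPartition.evenCols_eq, CPartition.evenCols_eq] at h1
    rw [CPartition.oddCols_eq, CPartition.oddCols_eq] at h2
    refine ⟨?_, ?_⟩
    · show (eww v.1.1.mult : ℤ) + eww v.1.2.1.mult + _ = n0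
      rw [← hA]; exact h1
    · show (oww v.1.1.mult : ℤ) + oww v.1.2.1.mult + _ = n1
      rw [← hB]; exact h2⟩
  invFun w := ⟨(multEquiv.symm w.1.1, multEquiv.symm w.1.2.1, zigzagEquiv m w.1.2.2), by
    have h1 := w.2.1
    have h2 := w.2.2
    have hA := zig_sum_a m w.1.2.2
    have hB := zig_sum_b m w.1.2.2
    have hf : (multEquiv.symm w.1.1).mult = w.1.1 := Equiv.apply_symm_apply multEquiv _
    have hg : (multEquiv.symm w.1.2.1).mult = w.1.2.1 := Equiv.apply_symm_apply multEquiv _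
    refine ⟨?_, ?_⟩
    · show ((multEquiv.symm w.1.1).evenCols : ℤ) + (multEquiv.symm w.1.2.1).evenCols
          + (∑ s : Fin (m+1), (zigzagEquiv m w.1.2.2).1.1 s) = n0
      rw [CPartition.evenCols_eq, CPartition.evenCols_eq, hf, hg, hA]
      exact h1
    · show ((multEquiv.symm w.1.1).oddCols : ℤ) + (multEquiv.symm w.1.2.1).oddCols
          + (∑ s : Fin m, (zigzagEquiv m w.1.2.2).1.2 s) = n1
      rw [CPartition.oddCols_eq, CPartition.oddCols_eq, hf, hg, hB]
      exact h2⟩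
  left_inv v := by
    apply Subtype.ext
    refine Prod.ext ?_ (Prod.ext ?_ ?_)
    · exact Equiv.symm_apply_apply multEquiv v.1.1
    · exact Equiv.symm_apply_apply multEquiv v.1.2.1
    · exact Equiv.apply_symm_apply (zigzagEquiv m) v.1.2.2
  right_inv w := by
    apply Subtype.ext
    refine Prod.ext ?_ (Prod.ext ?_ ?_)
    · exact Equiv.apply_symm_apply multEquiv w.1.1
    · exact Equiv.apply_symm_apply multEquiv w.1.2.1
    · exact Equiv.symm_apply_apply (zigzagEquiv m) w.1.2.2

end Steps

lemma sumA1 (m : ℕ) (x y : Fin m → ℕ) :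
    ∑ t : Fin m, (((t:ℕ):ℤ)+1) * ((y t : ℤ) - x t)
      = (∑ t : Fin m, ((t:ℕ):ℤ) * ((y t : ℤ) - x t))
        + (∑ t : Fin m, (y t : ℤ)) - ∑ t : Fin m, (x t : ℤ) := by
  rw [← Finset.sum_add_distrib, ← Finset.sum_sub_distrib]
  exact Finset.sum_congr rfl fun t _ => by ring

lemma sumA2 (m : ℕ) (x y : Fin m → ℕ) :
    (∑ t : Fin m, (y t : ℤ) * (((t:ℕ):ℤ)+1))
      + (∑ t : Fin m, (x t : ℤ) * ((m:ℤ) - ((t:ℕ):ℤ)))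
    = (∑ t : Fin m, ((t:ℕ):ℤ) * ((y t : ℤ) - x t))
      + (∑ t : Fin m, (y t : ℤ)) + (m:ℤ) * ∑ t : Fin m, (x t : ℤ) := by
  rw [Finset.mul_sum, ← Finset.sum_add_distrib, ← Finset.sum_add_distrib,
    ← Finset.sum_add_distrib]
  exact Finset.sum_congr rfl fun t _ => by ring

lemma w_key_cast (m : ℕ) (f : ℕ →₀ ℕ) :
    ((m:ℤ)+1) * (oww f : ℤ) = (m:ℤ) * (eww f : ℤ) + (wnat m f : ℤ) := by
  exact_mod_cast w_key m f

section Steps2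

variable (m : ℕ) (n0 n1 : ℤ)

/-- Step 3: eliminate the redundant coordinate `k`. -/
noncomputable def step3 :
    {w : (ℕ →₀ ℕ) × (ℕ →₀ ℕ) × (ℤ × (Fin m → ℕ) × (Fin m → ℕ)) //
        (eww w.1 : ℤ) + eww w.2.1
          + (((m:ℤ)+1) * w.2.2.1
            + ∑ t : Fin m, (((t:ℕ):ℤ)+1) * ((w.2.2.2.2 t : ℤ) - w.2.2.2.1 t)) = n0 ∧
        (oww w.1 : ℤ) + oww w.2.1
          + ((m:ℤ) * w.2.2.1
            + (∑ t : Fin m, ((t:ℕ):ℤ) * ((w.2.2.2.2 t : ℤ) - w.2.2.2.1 t))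
            + ∑ t : Fin m, (w.2.2.2.2 t : ℤ)) = n1} ≃
    {u : (ℕ →₀ ℕ) × (ℕ →₀ ℕ) × (Fin m → ℕ) × (Fin m → ℕ) //
        (wnat m u.1 : ℤ) + wnat m u.2.1
          + ((∑ t : Fin m, (u.2.2.2 t : ℤ) * (((t:ℕ):ℤ)+1))
            + ∑ t : Fin m, (u.2.2.1 t : ℤ) * ((m:ℤ) - ((t:ℕ):ℤ)))
          = n1 - m * (n0 - n1)} where
  toFun w := ⟨(w.1.1, w.1.2.1, w.1.2.2.2.1, w.1.2.2.2.2), by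
    have h1 := w.2.1
    have h2 := w.2.2
    have hWf := w_key_cast m w.1.1
    have hWg := w_key_cast m w.1.2.1
    have A1 := sumA1 m w.1.2.2.2.1 w.1.2.2.2.2
    have A2 := sumA2 m w.1.2.2.2.1 w.1.2.2.2.2
    show (wnat m w.1.1 : ℤ) + wnat m w.1.2.1
        + ((∑ t : Fin m, (w.1.2.2.2.2 t : ℤ) * (((t:ℕ):ℤ)+1))
          + ∑ t : Fin m, (w.1.2.2.2.1 t : ℤ) * ((m:ℤ) - ((t:ℕ):ℤ)))
        = n1 - m * (n0 - n1)
    linear_combination (-(m:ℤ)) * h1 + ((m:ℤ)+1) * h2 - hWf - hWg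
      + (m:ℤ) * A1 + A2⟩
  invFun u := ⟨(u.1.1, u.1.2.1,
      (n0 - n1 - ((eww u.1.1 : ℤ) + eww u.1.2.1) + ((oww u.1.1 : ℤ) + oww u.1.2.1)
        + ∑ t : Fin m, (u.1.2.2.1 t : ℤ),
       u.1.2.2.1, u.1.2.2.2)), by
    have h3 := u.2
    have hWf := w_key_cast m u.1.1
    have hWg := w_key_cast m u.1.2.1
    have A1 := sumA1 m u.1.2.2.1 u.1.2.2.2
    have A2 := sumA2 m u.1.2.2.1 u.1.2.2.2
    refine ⟨?_, ?_⟩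
    · show (eww u.1.1 : ℤ) + eww u.1.2.1
          + (((m:ℤ)+1) * (n0 - n1 - ((eww u.1.1 : ℤ) + eww u.1.2.1)
              + ((oww u.1.1 : ℤ) + oww u.1.2.1) + ∑ t : Fin m, (u.1.2.2.1 t : ℤ))
            + ∑ t : Fin m, (((t:ℕ):ℤ)+1) * ((u.1.2.2.2 t : ℤ) - u.1.2.2.1 t)) = n0
      linear_combination h3 + hWf + hWg + A1 - A2
    · show (oww u.1.1 : ℤ) + oww u.1.2.1
          + ((m:ℤ) * (n0 - n1 - ((eww u.1.1 : ℤ) + eww u.1.2.1)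
              + ((oww u.1.1 : ℤ) + oww u.1.2.1) + ∑ t : Fin m, (u.1.2.2.1 t : ℤ))
            + (∑ t : Fin m, ((t:ℕ):ℤ) * ((u.1.2.2.2 t : ℤ) - u.1.2.2.1 t))
            + ∑ t : Fin m, (u.1.2.2.2 t : ℤ)) = n1
      linear_combination h3 + hWf + hWg - A2⟩
  left_inv w := by
    apply Subtype.ext
    refine Prod.ext rfl (Prod.ext rfl (Prod.ext ?_ rfl))
    have h1 := w.2.1
    have h2 := w.2.2
    have A1 := sumA1 m w.1.2.2.2.1 w.1.2.2.2.2
    show (n0 - n1 - ((eww w.1.1 : ℤ) + eww w.1.2.1) + ((oww w.1.1 : ℤ) + oww w.1.2.1)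
        + ∑ t : Fin m, (w.1.2.2.2.1 t : ℤ)) = w.1.2.2.1
    linear_combination -h1 + h2 + A1
  right_inv u := by
    apply Subtype.ext
    rfl

end Steps2

lemma PE1_size_cast (m : ℕ) (f : ℕ →₀ ℕ) (y : Fin m → ℕ) :
    (szw (PE1 m (f, y)).1 : ℤ) + szw (PE1 m (f, y)).2
      = (wnat m f : ℤ) + ∑ t : Fin m, (y t : ℤ) * (((t:ℕ):ℤ)+1) := by
  exact_mod_cast PE1_size m f y

lemma PE2_size_cast (m : ℕ) (g : ℕ →₀ ℕ) (x : Fin m → ℕ) :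
    (szw (PE2 m (g, x)).1 : ℤ) + szw (PE2 m (g, x)).2
      = (wnat m g : ℤ) + ∑ t : Fin m, (x t : ℤ) * ((m:ℤ) - ((t:ℕ):ℤ)) := by
  have hx : ((∑ t : Fin m, x t * (m - (t:ℕ)) : ℕ) : ℤ)
      = ∑ t : Fin m, (x t : ℤ) * ((m:ℤ) - ((t:ℕ):ℤ)) := by
    rw [Nat.cast_sum]
    refine Finset.sum_congr rfl fun t _ => ?_
    rw [Nat.cast_mul, Nat.cast_sub (le_of_lt t.isLt)]
  rw [← hx]
  exact_mod_cast PE2_size m g x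

section Steps3

variable (m : ℕ) (n0 n1 : ℤ)

/-- Step 4: recombine into four multiplicity finsupps. -/
noncomputable def step4 :
    {u : (ℕ →₀ ℕ) × (ℕ →₀ ℕ) × (Fin m → ℕ) × (Fin m → ℕ) //
        (wnat m u.1 : ℤ) + wnat m u.2.1
          + ((∑ t : Fin m, (u.2.2.2 t : ℤ) * (((t:ℕ):ℤ)+1))
            + ∑ t : Fin m, (u.2.2.1 t : ℤ) * ((m:ℤ) - ((t:ℕ):ℤ)))
          = n1 - m * (n0 - n1)} ≃
    {q : (ℕ →₀ ℕ) × (ℕ →₀ ℕ) × (ℕ →₀ ℕ) × (ℕ →₀ ℕ) //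
        (szw q.1 : ℤ) + szw q.2.1 + szw q.2.2.1 + szw q.2.2.2
          = n1 - m * (n0 - n1)} where
  toFun u := ⟨((PE1 m (u.1.1, u.1.2.2.2)).1, (PE1 m (u.1.1, u.1.2.2.2)).2,
               (PE2 m (u.1.2.1, u.1.2.2.1)).1, (PE2 m (u.1.2.1, u.1.2.2.1)).2), by
    have h3 := u.2
    have P1 := PE1_size_cast m u.1.1 u.1.2.2.2
    have P2 := PE2_size_cast m u.1.2.1 u.1.2.2.1
    show (szw (PE1 m (u.1.1, u.1.2.2.2)).1 : ℤ) + szw (PE1 m (u.1.1, u.1.2.2.2)).2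
        + szw (PE2 m (u.1.2.1, u.1.2.2.1)).1 + szw (PE2 m (u.1.2.1, u.1.2.2.1)).2
        = n1 - m * (n0 - n1)
    linear_combination h3 + P1 + P2⟩
  invFun q := ⟨(((PE1 m).symm (q.1.1, q.1.2.1)).1,
                ((PE2 m).symm (q.1.2.2.1, q.1.2.2.2)).1,
                ((PE2 m).symm (q.1.2.2.1, q.1.2.2.2)).2,
                ((PE1 m).symm (q.1.1, q.1.2.1)).2), by
    have h4 := q.2
    have P1 := PE1_size_cast m ((PE1 m).symm (q.1.1, q.1.2.1)).1
      ((PE1 m).symm (q.1.1, q.1.2.1)).2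
    have P2 := PE2_size_cast m ((PE2 m).symm (q.1.2.2.1, q.1.2.2.2)).1
      ((PE2 m).symm (q.1.2.2.1, q.1.2.2.2)).2
    rw [show ((((PE1 m).symm (q.1.1, q.1.2.1)).1, ((PE1 m).symm (q.1.1, q.1.2.1)).2)
        = (PE1 m).symm (q.1.1, q.1.2.1)) from rfl, Equiv.apply_symm_apply] at P1
    rw [show ((((PE2 m).symm (q.1.2.2.1, q.1.2.2.2)).1,
          ((PE2 m).symm (q.1.2.2.1, q.1.2.2.2)).2)
        = (PE2 m).symm (q.1.2.2.1, q.1.2.2.2)) from rfl, Equiv.apply_symm_apply] at P2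
    dsimp only at P1 P2
    show (wnat m ((PE1 m).symm (q.1.1, q.1.2.1)).1 : ℤ)
        + wnat m ((PE2 m).symm (q.1.2.2.1, q.1.2.2.2)).1
        + ((∑ t : Fin m, (((PE1 m).symm (q.1.1, q.1.2.1)).2 t : ℤ) * (((t:ℕ):ℤ)+1))
          + ∑ t : Fin m, (((PE2 m).symm (q.1.2.2.1, q.1.2.2.2)).2 t : ℤ)
              * ((m:ℤ) - ((t:ℕ):ℤ)))
        = n1 - m * (n0 - n1)
    linear_combination h4 - P1 - P2⟩
  left_inv u := by
    apply Subtype.ext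
    have e1 : (PE1 m).symm ((PE1 m (u.1.1, u.1.2.2.2)).1, (PE1 m (u.1.1, u.1.2.2.2)).2)
        = (u.1.1, u.1.2.2.2) := by
      rw [show ((PE1 m (u.1.1, u.1.2.2.2)).1, (PE1 m (u.1.1, u.1.2.2.2)).2)
          = PE1 m (u.1.1, u.1.2.2.2) from rfl]
      exact Equiv.symm_apply_apply _ _
    have e2 : (PE2 m).symm ((PE2 m (u.1.2.1, u.1.2.2.1)).1, (PE2 m (u.1.2.1, u.1.2.2.1)).2)
        = (u.1.2.1, u.1.2.2.1) := by
      rw [show ((PE2 m (u.1.2.1, u.1.2.2.1)).1, (PE2 m (u.1.2.1, u.1.2.2.1)).2)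
          = PE2 m (u.1.2.1, u.1.2.2.1) from rfl]
      exact Equiv.symm_apply_apply _ _
    dsimp only
    rw [e1, e2]
  right_inv q := by
    apply Subtype.ext
    have e1 : PE1 m (((PE1 m).symm (q.1.1, q.1.2.1)).1, ((PE1 m).symm (q.1.1, q.1.2.1)).2)
        = (q.1.1, q.1.2.1) := by
      rw [show (((PE1 m).symm (q.1.1, q.1.2.1)).1, ((PE1 m).symm (q.1.1, q.1.2.1)).2)
          = (PE1 m).symm (q.1.1, q.1.2.1) from rfl]
      exact Equiv.apply_symm_apply _ _
    have e2 : PE2 m (((PE2 m).symm (q.1.2.2.1, q.1.2.2.2)).1,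
          ((PE2 m).symm (q.1.2.2.1, q.1.2.2.2)).2)
        = (q.1.2.2.1, q.1.2.2.2) := by
      rw [show (((PE2 m).symm (q.1.2.2.1, q.1.2.2.2)).1,
            ((PE2 m).symm (q.1.2.2.1, q.1.2.2.2)).2)
          = (PE2 m).symm (q.1.2.2.1, q.1.2.2.2) from rfl]
      exact Equiv.apply_symm_apply _ _
    dsimp only
    rw [e1, e2]

lemma size_symm (P : ℕ →₀ ℕ) : (multEquiv.symm P).size = szw P := by
  rw [CPartition.size_eq]
  exact congrArg szw (Equiv.apply_symm_apply multEquiv P)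

/-- Step 5: back to partitions. -/
noncomputable def stepE :
    {q : (ℕ →₀ ℕ) × (ℕ →₀ ℕ) × (ℕ →₀ ℕ) × (ℕ →₀ ℕ) //
        (szw q.1 : ℤ) + szw q.2.1 + szw q.2.2.1 + szw q.2.2.2
          = n1 - m * (n0 - n1)} ≃
    {t : CPartition × CPartition × CPartition × CPartition //
        (t.1.size : ℤ) + t.2.1.size + t.2.2.1.size + t.2.2.2.size
          = n1 - m * (n0 - n1)} where
  toFun q := ⟨(multEquiv.symm q.1.1, multEquiv.symm q.1.2.1,
               multEquiv.symm q.1.2.2.1, multEquiv.symm q.1.2.2.2), by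
    have h := q.2
    show ((multEquiv.symm q.1.1).size : ℤ) + (multEquiv.symm q.1.2.1).size
        + (multEquiv.symm q.1.2.2.1).size + (multEquiv.symm q.1.2.2.2).size
        = n1 - m * (n0 - n1)
    rw [size_symm, size_symm, size_symm, size_symm]
    exact h⟩
  invFun t := ⟨(t.1.1.mult, t.1.2.1.mult, t.1.2.2.1.mult, t.1.2.2.2.mult), by
    have h := t.2
    show (szw t.1.1.mult : ℤ) + szw t.1.2.1.mult + szw t.1.2.2.1.mult
        + szw t.1.2.2.2.mult = n1 - m * (n0 - n1)
    rw [← CPartition.size_eq, ← CPartition.size_eq, ← CPartition.size_eq,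
      ← CPartition.size_eq]
    exact h⟩
  left_inv q := by
    apply Subtype.ext
    refine Prod.ext ?_ (Prod.ext ?_ (Prod.ext ?_ ?_)) <;>
      exact Equiv.apply_symm_apply multEquiv _
  right_inv t := by
    apply Subtype.ext
    refine Prod.ext ?_ (Prod.ext ?_ (Prod.ext ?_ ?_)) <;>
      exact Equiv.symm_apply_apply multEquiv _

end Steps3

lemma szw_single_le (p : ℕ →₀ ℕ) (k : ℕ) : p k * (k+1) ≤ szw p := by
  by_cases h : k ∈ p.support
  · exact Finset.single_le_sum (f := fun j => p j * (j+1)) (fun _ _ => Nat.zero_le _) h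
  · rw [Finsupp.notMem_support_iff.1 h]
    simp

lemma finite_bounded (n : ℕ) : Finite {p : ℕ →₀ ℕ // szw p ≤ n} := by
  have hb : ∀ (p : {p : ℕ →₀ ℕ // szw p ≤ n}) (k : ℕ), p.1 k ≤ n := by
    intro p k
    have h1 := szw_single_le p.1 k
    have h2 := p.2
    have h3 : p.1 k ≤ p.1 k * (k+1) := Nat.le_mul_of_pos_right _ (by omega)
    omega
  have hzero : ∀ (p : {p : ℕ →₀ ℕ // szw p ≤ n}) (k : ℕ), n < k → p.1 k = 0 := by
    intro p k hk
    by_contra hc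
    have h1 := szw_single_le p.1 k
    have h2 := p.2
    have h3 : k+1 ≤ p.1 k * (k+1) := Nat.le_mul_of_pos_left _ (by omega)
    omega
  apply Finite.of_injective (β := Fin (n+1) → Fin (n+1))
    (fun p => fun k => ⟨min (p.1 k) n, by omega⟩)
  intro p1 p2 h
  apply Subtype.ext
  apply Finsupp.ext
  intro k
  by_cases hk : k < n+1
  · have hc := congrFun h ⟨k, hk⟩
    simp only [Fin.mk.injEq] at hc
    have h1 := hb p1 k
    have h2 := hb p2 k
    omega
  · rw [hzero p1 k (by omega), hzero p2 k (by omega)]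

lemma finite_S4 (m : ℕ) (n0 n1 : ℤ) :
    Finite {q : (ℕ →₀ ℕ) × (ℕ →₀ ℕ) × (ℕ →₀ ℕ) × (ℕ →₀ ℕ) //
        (szw q.1 : ℤ) + szw q.2.1 + szw q.2.2.1 + szw q.2.2.2
          = n1 - m * (n0 - n1)} := by
  by_cases hN : 0 ≤ n1 - (m:ℤ) * (n0 - n1)
  · obtain ⟨n, hcast⟩ : ∃ n : ℕ, ((n:ℕ):ℤ) = n1 - m * (n0 - n1) :=
      ⟨_, Int.toNat_of_nonneg hN⟩
    haveI := finite_bounded n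
    have key : ∀ q : {q : (ℕ →₀ ℕ) × (ℕ →₀ ℕ) × (ℕ →₀ ℕ) × (ℕ →₀ ℕ) //
        (szw q.1 : ℤ) + szw q.2.1 + szw q.2.2.1 + szw q.2.2.2 = n1 - m * (n0 - n1)},
        szw q.1.1 ≤ n ∧ szw q.1.2.1 ≤ n ∧ szw q.1.2.2.1 ≤ n ∧ szw q.1.2.2.2 ≤ n := by
      intro q
      have h := q.2
      refine ⟨?_, ?_, ?_, ?_⟩ <;> omega
    apply Finite.of_injective
      (β := {p : ℕ →₀ ℕ // szw p ≤ n} × {p : ℕ →₀ ℕ // szw p ≤ n}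
        × {p : ℕ →₀ ℕ // szw p ≤ n} × {p : ℕ →₀ ℕ // szw p ≤ n})
      (fun q => (⟨q.1.1, (key q).1⟩, ⟨q.1.2.1, (key q).2.1⟩,
        ⟨q.1.2.2.1, (key q).2.2.1⟩, ⟨q.1.2.2.2, (key q).2.2.2⟩))
    intro a b h
    apply Subtype.ext
    refine Prod.ext ?_ (Prod.ext ?_ (Prod.ext ?_ ?_))
    · exact congrArg (fun z => z.1.1) h
    · exact congrArg (fun z => z.2.1.1) h
    · exact congrArg (fun z => z.2.2.1.1) h
    · exact congrArg (fun z => z.2.2.2.1) h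
  · have : IsEmpty {q : (ℕ →₀ ℕ) × (ℕ →₀ ℕ) × (ℕ →₀ ℕ) × (ℕ →₀ ℕ) //
        (szw q.1 : ℤ) + szw q.2.1 + szw q.2.2.1 + szw q.2.2.2
          = n1 - m * (n0 - n1)} := by
      constructor
      rintro ⟨q, hq⟩
      omega
    infer_instance

/-- The combinatorial content of the character formula for the slope-`m`
slanted relaxed Verma module: the states `(λ, μ, a, b)` of bidegree `(n₀, n₁)`
form a finite set of cardinality `p₄(n₁ − m(n₀ − n₁))`. -/
theorem slanted_relaxed_verma_character (m : ℕ) (hm : 1 ≤ m) (n0 n1 : ℤ) :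
    {x : CPartition × CPartition × (Fin (m + 1) → ℤ) × (Fin m → ℤ) |
        (∀ s : Fin m, x.2.2.1 s.castSucc ≤ x.2.2.2 s ∧ x.2.2.1 s.succ ≤ x.2.2.2 s) ∧
        (x.1.evenCols : ℤ) + x.2.1.evenCols + (∑ s, x.2.2.1 s) = n0 ∧
        (x.1.oddCols : ℤ) + x.2.1.oddCols + (∑ s, x.2.2.2 s) = n1}.Finite ∧
    Nat.card {x : CPartition × CPartition × (Fin (m + 1) → ℤ) × (Fin m → ℤ) //
        (∀ s : Fin m, x.2.2.1 s.castSucc ≤ x.2.2.2 s ∧ x.2.2.1 s.succ ≤ x.2.2.2 s) ∧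
        (x.1.evenCols : ℤ) + x.2.1.evenCols + (∑ s, x.2.2.1 s) = n0 ∧
        (x.1.oddCols : ℤ) + x.2.1.oddCols + (∑ s, x.2.2.2 s) = n1}
      = Nat.card {t : CPartition × CPartition × CPartition × CPartition //
          (t.1.size : ℤ) + t.2.1.size + t.2.2.1.size + t.2.2.2.size
            = n1 - m * (n0 - n1)} := by
  have chain14 := (step1 m n0 n1).trans ((step2 m n0 n1).trans
    ((step3 m n0 n1).trans (step4 m n0 n1)))
  constructor
  · rw [← Set.finite_coe_iff]
    haveI := finite_S4 m n0 n1
    exact Finite.of_equiv _ chain14.symm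
  · exact Nat.card_congr (chain14.trans (stepE m n0 n1))
end
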